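/- Let φ be a smooth positive function on an open subset U of {(r,s) ∈ ℝ² : 0 < s < r} with φ − s·φ_s + (r² − s²)·φ_ss ≠ 0 on U. Define Q := (1/(2r))·(r·φ_ss − φ_r + s·φ_rs)/(φ − s·φ_s + (r² − s²)·φ_ss), P := (r·φ_s + s·φ_r)/(2rφ) − (Q/φ)·(s·φ + (r² − s²)·φ_s), and U₀ := (s·φ + (r² − s²)·φ_s)/φ. Then identically on U: U₀·[ (r² − s²)(2Q − s·Q_s) − s·P − 1 ] = (r² − s²)(s·P_s − 2P) − s·(1 + s·P). -/

import Mathlib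

open Topology Filter


/-- Partial derivative with respect to the first variable `r`. -/
noncomputable def pderivR (f : ℝ → ℝ → ℝ) (r s : ℝ) : ℝ := deriv (fun t => f t s) r

/-- Partial derivative with respect to the second variable `s`. -/
noncomputable def pderivS (f : ℝ → ℝ → ℝ) (r s : ℝ) : ℝ := deriv (fun t => f r t) s

/-- Geodesic coefficient `Q := (1/(2r))·(rφ_ss − φ_r + sφ_rs)/(φ − sφ_s + (r² − s²)φ_ss)`. -/
noncomputable def Qc (φ : ℝ → ℝ → ℝ) (r s : ℝ) : ℝ :=
  (1 / (2 * r)) *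
    ((r * pderivS (pderivS φ) r s - pderivR φ r s + s * pderivR (pderivS φ) r s) /
      (φ r s - s * pderivS φ r s + (r ^ 2 - s ^ 2) * pderivS (pderivS φ) r s))

/-- Geodesic coefficient `P := (rφ_s + sφ_r)/(2rφ) − (Q/φ)·(sφ + (r² − s²)φ_s)`. -/
noncomputable def Pc (φ : ℝ → ℝ → ℝ) (r s : ℝ) : ℝ :=
  (r * pderivS φ r s + s * pderivR φ r s) / (2 * r * φ r s)
    - (Qc φ r s / φ r s) * (s * φ r s + (r ^ 2 - s ^ 2) * pderivS φ r s)

/-- `U₀ := (s·φ + (r² − s²)·φ_s)/φ`. -/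
noncomputable def U0 (φ : ℝ → ℝ → ℝ) (r s : ℝ) : ℝ :=
  (s * φ r s + (r ^ 2 - s ^ 2) * pderivS φ r s) / φ r s

theorem sliceS' (g : ℝ × ℝ → ℝ) (p : ℝ × ℝ) (hg : DifferentiableAt ℝ g p) :
    HasDerivAt (fun t => g (p.1, t)) (fderiv ℝ g p (0, 1)) p.2 := by
  have h1 : HasDerivAt (fun t : ℝ => ((p.1 : ℝ), t)) ((0 : ℝ), (1 : ℝ)) p.2 :=
    (hasDerivAt_const _ _).prodMk (hasDerivAt_id _)
  have := hg.hasFDerivAt.comp_hasDerivAt p.2 (by simpa using h1)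
  exact this

theorem sliceR' (g : ℝ × ℝ → ℝ) (p : ℝ × ℝ) (hg : DifferentiableAt ℝ g p) :
    HasDerivAt (fun t => g (t, p.2)) (fderiv ℝ g p (1, 0)) p.1 := by
  have h1 : HasDerivAt (fun t : ℝ => (t, (p.2 : ℝ))) ((1 : ℝ), (0 : ℝ)) p.1 :=
    (hasDerivAt_id _).prodMk (hasDerivAt_const _ _)
  have := hg.hasFDerivAt.comp_hasDerivAt p.1 (by simpa using h1)
  exact this

set_option maxHeartbeats 4000000 in

/-- The identity `U₀·[(r² − s²)(2Q − sQ_s) − sP − 1]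
= (r² − s²)(sP_s − 2P) − s(1 + sP)` from the proof of Theorem 3. -/
theorem stmt_13
    (U : Set (ℝ × ℝ)) (hU : IsOpen U)
    (hUsub : U ⊆ {p : ℝ × ℝ | 0 < p.2 ∧ p.2 < p.1})
    (φ : ℝ → ℝ → ℝ) (hφ : ContDiffOn ℝ (⊤ : ℕ∞) (fun p : ℝ × ℝ => φ p.1 p.2) U)
    (hφpos : ∀ p ∈ U, 0 < φ p.1 p.2)
    (hden : ∀ p ∈ U, φ p.1 p.2 - p.2 * pderivS φ p.1 p.2
        + (p.1 ^ 2 - p.2 ^ 2) * pderivS (pderivS φ) p.1 p.2 ≠ 0) :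
    ∀ p ∈ U,
      U0 φ p.1 p.2 *
          ((p.1 ^ 2 - p.2 ^ 2) * (2 * Qc φ p.1 p.2 - p.2 * pderivS (Qc φ) p.1 p.2)
            - p.2 * Pc φ p.1 p.2 - 1)
        = (p.1 ^ 2 - p.2 ^ 2) * (p.2 * pderivS (Pc φ) p.1 p.2 - 2 * Pc φ p.1 p.2)
          - p.2 * (1 + p.2 * Pc φ p.1 p.2) := by
  intro p hp
  classical
  set f : ℝ × ℝ → ℝ := fun q => φ q.1 q.2 with hfdef
  have hfd : ContDiffOn ℝ (⊤ : ℕ∞) (fun q => fderiv ℝ f q) U := hφ.fderiv_of_isOpen hU (by simp)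
  set f1 : ℝ × ℝ → ℝ := fun q => fderiv ℝ f q (0, 1) with hf1def
  set f0 : ℝ × ℝ → ℝ := fun q => fderiv ℝ f q (1, 0) with hf0def
  have hf1c : ContDiffOn ℝ (⊤ : ℕ∞) f1 U := hfd.clm_apply contDiffOn_const
  have hf0c : ContDiffOn ℝ (⊤ : ℕ∞) f0 U := hfd.clm_apply contDiffOn_const
  set f11 : ℝ × ℝ → ℝ := fun q => fderiv ℝ f1 q (0, 1) with hf11def
  set f10 : ℝ × ℝ → ℝ := fun q => fderiv ℝ f1 q (1, 0) with hf10def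
  set f01 : ℝ × ℝ → ℝ := fun q => fderiv ℝ f0 q (0, 1) with hf01def
  have hf11c : ContDiffOn ℝ (⊤ : ℕ∞) f11 U :=
    (hf1c.fderiv_of_isOpen hU (by simp)).clm_apply contDiffOn_const
  have hf10c : ContDiffOn ℝ (⊤ : ℕ∞) f10 U :=
    (hf1c.fderiv_of_isOpen hU (by simp)).clm_apply contDiffOn_const
  have diffAt : ∀ g : ℝ × ℝ → ℝ, ContDiffOn ℝ (⊤ : ℕ∞) g U → ∀ q ∈ U, DifferentiableAt ℝ g q :=
    fun g hg q hq => (hg.contDiffAt (hU.mem_nhds hq)).differentiableAt (by simp)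
  have e1 : ∀ q ∈ U, pderivS φ q.1 q.2 = f1 q := fun q hq =>
    (sliceS' f q (diffAt f hφ q hq)).deriv
  have e0 : ∀ q ∈ U, pderivR φ q.1 q.2 = f0 q := fun q hq =>
    (sliceR' f q (diffAt f hφ q hq)).deriv
  have hevS : ∀ q ∈ U, ∀ᶠ t in 𝓝 q.2, ((q.1 : ℝ), t) ∈ U := by
    intro q hq
    have hc : Continuous fun t : ℝ => ((q.1 : ℝ), t) := by fun_prop
    exact hc.continuousAt (x := q.2) |>.preimage_mem_nhds (hU.mem_nhds (by simpa using hq))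
  have hevR : ∀ q ∈ U, ∀ᶠ t in 𝓝 q.1, ((t : ℝ), q.2) ∈ U := by
    intro q hq
    have hc : Continuous fun t : ℝ => ((t : ℝ), (q.2 : ℝ)) := by fun_prop
    exact hc.continuousAt (x := q.1) |>.preimage_mem_nhds (hU.mem_nhds (by simpa using hq))
  have hDs1 : ∀ q ∈ U, HasDerivAt (fun t => pderivS φ q.1 t) (f11 q) q.2 := by
    intro q hq
    have heq : (fun t => f1 (q.1, t)) =ᶠ[𝓝 q.2] fun t => pderivS φ q.1 t := by
      filter_upwards [hevS q hq] with t ht using (e1 (q.1, t) ht).symm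
    exact (sliceS' f1 q (diffAt f1 hf1c q hq)).congr_of_eventuallyEq heq.symm
  have e11 : ∀ q ∈ U, pderivS (pderivS φ) q.1 q.2 = f11 q := fun q hq => (hDs1 q hq).deriv
  have hRs1 : ∀ q ∈ U, HasDerivAt (fun t => pderivS φ t q.2) (f10 q) q.1 := by
    intro q hq
    have heq : (fun t => f1 (t, q.2)) =ᶠ[𝓝 q.1] fun t => pderivS φ t q.2 := by
      filter_upwards [hevR q hq] with t ht using (e1 (t, q.2) ht).symm
    exact (sliceR' f1 q (diffAt f1 hf1c q hq)).congr_of_eventuallyEq heq.symm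
  have e10 : ∀ q ∈ U, pderivR (pderivS φ) q.1 q.2 = f10 q := fun q hq => (hRs1 q hq).deriv
  have hSs0 : ∀ q ∈ U, HasDerivAt (fun t => pderivR φ q.1 t) (f01 q) q.2 := by
    intro q hq
    have heq : (fun t => f0 (q.1, t)) =ᶠ[𝓝 q.2] fun t => pderivR φ q.1 t := by
      filter_upwards [hevS q hq] with t ht using (e0 (q.1, t) ht).symm
    exact (sliceS' f0 q (diffAt f0 hf0c q hq)).congr_of_eventuallyEq heq.symm
  -- Clairaut
  have hclair : f01 p = f10 p := by
    have hd2 : DifferentiableAt ℝ (fun q => fderiv ℝ f q) p :=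
      (hfd.contDiffAt (hU.mem_nhds hp)).differentiableAt (by simp)
    have hA : ∀ v : ℝ × ℝ, HasFDerivAt (fun q => fderiv ℝ f q v)
        ((ContinuousLinearMap.apply ℝ ℝ v).comp (fderiv ℝ (fun q => fderiv ℝ f q) p)) p :=
      fun v => ((ContinuousLinearMap.apply ℝ ℝ v).hasFDerivAt).comp p hd2.hasFDerivAt
    have h1 : fderiv ℝ f1 p = (ContinuousLinearMap.apply ℝ ℝ ((0:ℝ),(1:ℝ))).comp
        (fderiv ℝ (fun q => fderiv ℝ f q) p) := (hA (0,1)).fderiv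
    have h0 : fderiv ℝ f0 p = (ContinuousLinearMap.apply ℝ ℝ ((1:ℝ),(0:ℝ))).comp
        (fderiv ℝ (fun q => fderiv ℝ f q) p) := (hA (1,0)).fderiv
    have hsym : fderiv ℝ (fderiv ℝ f) p (0,1) (1,0) = fderiv ℝ (fderiv ℝ f) p (1,0) (0,1) :=
      ((hφ.contDiffAt (hU.mem_nhds hp)).isSymmSndFDerivAt (by rw [minSmoothness_of_isRCLikeNormedField]; exact WithTop.coe_le_coe.mpr (le_top : (2 : ℕ∞) ≤ ⊤))).eq _ _
    simp only [hf01def, hf10def, h1, h0, ContinuousLinearMap.comp_apply,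
      ContinuousLinearMap.apply_apply]
    exact hsym
  -- third order slice derivatives
  have hDs11 : HasDerivAt (fun t => pderivS (pderivS φ) p.1 t) (fderiv ℝ f11 p (0, 1)) p.2 := by
    have heq : (fun t => f11 (p.1, t)) =ᶠ[𝓝 p.2] fun t => pderivS (pderivS φ) p.1 t := by
      filter_upwards [hevS p hp] with t ht using (e11 (p.1, t) ht).symm
    exact (sliceS' f11 p (diffAt f11 hf11c p hp)).congr_of_eventuallyEq heq.symm
  have hDs10 : HasDerivAt (fun t => pderivR (pderivS φ) p.1 t) (fderiv ℝ f10 p (0, 1)) p.2 := by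
    have heq : (fun t => f10 (p.1, t)) =ᶠ[𝓝 p.2] fun t => pderivR (pderivS φ) p.1 t := by
      filter_upwards [hevS p hp] with t ht using (e10 (p.1, t) ht).symm
    exact (sliceS' f10 p (diffAt f10 hf10c p hp)).congr_of_eventuallyEq heq.symm
  -- slice derivatives at p with pderiv values
  have hDa : HasDerivAt (fun t => φ p.1 t) (pderivS φ p.1 p.2) p.2 := by
    have h := sliceS' f p (diffAt f hφ p hp)
    rwa [show fderiv ℝ f p (0, 1) = pderivS φ p.1 p.2 from (e1 p hp).symm] at h
  have hDa1 : HasDerivAt (fun t => pderivS φ p.1 t) (pderivS (pderivS φ) p.1 p.2) p.2 := by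
    have h := hDs1 p hp
    rwa [show f11 p = pderivS (pderivS φ) p.1 p.2 from (e11 p hp).symm] at h
  have hDa0 : HasDerivAt (fun t => pderivR φ p.1 t) (pderivR (pderivS φ) p.1 p.2) p.2 := by
    have h := hSs0 p hp
    rwa [hclair, show f10 p = pderivR (pderivS φ) p.1 p.2 from (e10 p hp).symm] at h
  -- nonvanishing
  obtain ⟨hs0, hsr⟩ := hUsub hp
  have hr0 : (p.1 : ℝ) ≠ 0 := ne_of_gt (hs0.trans hsr)
  have hφ0 : φ p.1 p.2 ≠ 0 := ne_of_gt (hφpos p hp)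
  have hD0 : φ p.1 p.2 - p.2 * pderivS φ p.1 p.2
      + (p.1 ^ 2 - p.2 ^ 2) * pderivS (pderivS φ) p.1 p.2 ≠ 0 := hden p hp
  have h2r : 2 * p.1 * φ p.1 p.2 ≠ 0 := by
    simp [hr0, hφ0]
  -- derivative of Qc slice
  have hNd := ((hDs11.const_mul p.1).sub hDa0).add ((hasDerivAt_id p.2).mul hDs10)
  have hDend := (hDa.sub ((hasDerivAt_id p.2).mul hDa1)).add
    (((hasDerivAt_pow 2 p.2).const_sub (p.1 ^ 2)).mul hDs11)
  have hQder : HasDerivAt (fun t => Qc φ p.1 t) _ p.2 := (hNd.div hDend hD0).const_mul (1 / (2 * p.1))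
  have hQS : HasDerivAt (fun t => Qc φ p.1 t) (pderivS (Qc φ) p.1 p.2) p.2 :=
    hQder.differentiableAt.hasDerivAt
  -- derivative of Pc slice
  have hPart1 := ((hDa1.const_mul p.1).add ((hasDerivAt_id p.2).mul hDa0)).div
    (hDa.const_mul (2 * p.1)) h2r
  have hB := ((hasDerivAt_id p.2).mul hDa).add
    (((hasDerivAt_pow 2 p.2).const_sub (p.1 ^ 2)).mul hDa1)
  have hPder : HasDerivAt (fun t => Pc φ p.1 t) _ p.2 := hPart1.sub ((hQS.div hDa hφ0).mul hB)
  have hPS : pderivS (Pc φ) p.1 p.2 = _ := hPder.deriv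
  rw [hPS]
  simp only [U0, Qc, Pc, Pi.add_apply, Pi.sub_apply, Pi.mul_apply, Pi.div_apply, id]
  set QS := pderivS (Qc φ) p.1 p.2
  field_simp
  ring
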